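/- Let G be a finite abelian group with exponent n coprime to 2, and let * be the classical involution on F₂G given by (Σ a_g g)* = Σ a_g g^{-1}. Then F₂G is *-clean if and only if there exists a positive integer t with 2^t ≡ −1 (mod n). -/

import Mathlib

/-!
Over `F₂` the Frobenius `x ↦ x ^ 2 ^ t` of the commutative ring `F₂G` is
`Σ a_g g ↦ Σ a_g g ^ 2 ^ t`. If `2 ^ t ≡ -1 (mod n)` it is the involution, which therefore fixes
every idempotent; as the finite ring `F₂G` is clean, it is then `*`-clean. Conversely, in
characteristic `2` a decomposition `e = u + f` of an idempotent `e` into a unit and an idempotent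
forces `u = 1`, so `*`-cleanness makes every idempotent symmetric. For `g` of order `n`, the sum of
the orbit `{g ^ 2 ^ k}` is an idempotent (squaring permutes the orbit since `n` is odd), and its
symmetry puts `g⁻¹` in the orbit, i.e. `2 ^ k ≡ -1 (mod n)` for some `k`.
-/

namespace MonoidAlgebra

variable {R M : Type*}

instance finite [Semiring R] [Finite R] [Finite M] : Finite (MonoidAlgebra R M) :=
  Finite.of_injective (fun x ↦ ⇑x.coeff) (DFunLike.coe_injective.comp coeff_injective)

instance charP [Semiring R] [Monoid M] (p : ℕ) [CharP R p] : CharP (MonoidAlgebra R M) p :=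
  charP_of_injective_ringHom (f := singleOneRingHom)
    (fun _ _ h ↦ Finsupp.single_injective 1 (congrArg coeff h)) p

theorem pow_char_pow_eq_mapDomain [CommMonoid M] {p : ℕ} [Fact p.Prime] (t : ℕ)
    (x : MonoidAlgebra (ZMod p) M) : x ^ p ^ t = mapDomain (· ^ p ^ t) x := by
  induction x using induction_linear with
  | zero => simp [(Fact.out : p.Prime).ne_zero]
  | add x y hx hy => rw [add_pow_char_pow, hx, hy, mapDomain_add]
  | single m r => rw [single_pow, ZMod.pow_card_pow, mapDomain_single]

end MonoidAlgebra

theorem exists_pos_isIdempotentElem_pow {M : Type*} [Monoid M] [Finite M] (a : M) :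
    ∃ N, 0 < N ∧ IsIdempotentElem (a ^ N) := by
  obtain ⟨m, n, hmn, h⟩ := Set.finite_univ.exists_lt_map_eq_of_forall_mem
    (f := fun k ↦ a ^ k) fun _ ↦ Set.mem_univ _
  have periodic : ∀ c, a ^ (m + (n - m) * c) = a ^ m := by
    intro c
    induction c with
    | zero => simp
    | succ c ih =>
      rw [mul_add_one, ← add_assoc, pow_add, ih, ← pow_add, Nat.add_sub_cancel' hmn.le]
      exact h.symm
  have hp : 0 < n - m := Nat.sub_pos_of_lt hmn
  have hmN : m ≤ (n - m) * (m + 1) := by nlinarith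
  refine ⟨(n - m) * (m + 1), by positivity, ?_⟩
  calc _ = a ^ ((n - m) * (m + 1) - m) * a ^ (m + (n - m) * (m + 1)) := by
        rw [← pow_add, ← pow_add]; congr 1; omega
    _ = _ := by rw [periodic, ← pow_add, Nat.sub_add_cancel hmN]

section CommRing

variable {R : Type*} [CommRing R]

theorem isUnit_sub_one_sub_of_isIdempotentElem_pow {a : R} {N : ℕ} (hN : 0 < N)
    (h : IsIdempotentElem (a ^ N)) : IsUnit (a - (1 - a ^ N)) := by
  set f := a ^ N
  -- `a` is invertible in `fR` and nilpotent in `(1 - f)R`, where `1 - a` is inverted by `S`.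
  set S := ∑ i ∈ Finset.range N, a ^ i
  have ha : a * a ^ (N - 1) = f := by rw [← pow_succ', Nat.sub_add_cancel hN]
  have hS : S * (a - 1) = f - 1 := geom_sum_mul a N
  refine .of_mul_eq_one (a ^ (N - 1) * f - S * (1 - f)) ?_
  linear_combination (2 + a ^ (N - 1) + S) * h.eq + f * ha - (1 - f) * hS

theorem exists_isUnit_isIdempotentElem_eq_add [Finite R] (a : R) :
    ∃ u e : R, IsUnit u ∧ IsIdempotentElem e ∧ a = u + e := by
  obtain ⟨N, hN, h⟩ := exists_pos_isIdempotentElem_pow a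
  exact ⟨_, _, isUnit_sub_one_sub_of_isIdempotentElem_pow hN h, h.one_sub, by ring⟩

theorem IsUnit.eq_one_of_isIdempotentElem_eq_add [CharP R 2] {u e f : R} (hu : IsUnit u)
    (he : IsIdempotentElem e) (hf : IsIdempotentElem f) (h : e = u + f) : u = 1 := by
  have hue : u = e + f := by rw [h, add_assoc, CharTwo.add_self_eq_zero, add_zero]
  refine (IsIdempotentElem.iff_eq_one_of_isUnit hu).mp ?_
  rw [IsIdempotentElem, hue, CharTwo.add_mul_self, he.eq, hf.eq]

end CommRing

section Group

variable {G : Type*} [Group G]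

theorem pow_eq_inv_iff_orderOf_dvd (g : G) (m : ℕ) : g ^ m = g⁻¹ ↔ orderOf g ∣ m + 1 := by
  rw [orderOf_dvd_iff_pow_eq_one, pow_succ, mul_eq_one_iff_eq_inv]

theorem forall_pow_eq_inv_iff_exponent_dvd (m : ℕ) :
    (∀ g : G, g ^ m = g⁻¹) ↔ Monoid.exponent G ∣ m + 1 := by
  simp only [Monoid.exponent_dvd_iff_forall_pow_eq_one, pow_succ, mul_eq_one_iff_eq_inv]

end Group

theorem Monoid.pow_two_injective_of_odd_exponent {M : Type*} [Monoid M]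
    (hodd : Odd (Monoid.exponent M)) : Function.Injective fun x : M ↦ x ^ 2 := by
  obtain ⟨k, hk⟩ := hodd
  have h : ∀ x : M, (x ^ 2) ^ (k + 1) = x := fun x ↦ by
    rw [← pow_mul, show 2 * (k + 1) = Monoid.exponent M + 1 by omega, pow_succ,
      Monoid.pow_exponent_eq_one, one_mul]
  intro x y hxy
  rw [← h x, ← h y]
  exact congrArg (· ^ (k + 1)) hxy

theorem ZMod.natCast_eq_neg_one_iff_dvd (m n : ℕ) : (m : ZMod n) = -1 ↔ n ∣ m + 1 := by
  rw [← ZMod.natCast_eq_zero_iff, Nat.cast_add, Nat.cast_one, add_eq_zero_iff_eq_neg]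

theorem ZMod.exists_pos_pow_eq_neg_one {a n k : ℕ} (hcop : a.Coprime n)
    (hk : (a : ZMod n) ^ k = -1) : ∃ t, 0 < t ∧ (a : ZMod n) ^ t = -1 := by
  have hn : 0 < n := Nat.pos_of_ne_zero fun h ↦ by
    subst h; simp only [Nat.coprime_zero_right] at hcop; subst hcop; norm_num at hk
  refine ⟨k + n.totient, by positivity, ?_⟩
  have := (ZMod.natCast_eq_natCast_iff _ _ _).mpr (Nat.ModEq.pow_totient hcop)
  push_cast at this
  rw [pow_add, this, hk, mul_one]

namespace MonoidAlgebra

theorem isIdempotentElem_sum_single_one {M : Type*} [CommMonoid M] {T : Finset M}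
    (hmaps : Set.MapsTo (· ^ 2) (T : Set M) T) (hinj : Set.InjOn (· ^ 2) (T : Set M)) :
    IsIdempotentElem (∑ m ∈ T, single m (1 : ZMod 2)) := by
  rw [IsIdempotentElem, ← sq, sum_pow_char]
  simp_rw [single_pow, one_pow]
  exact Finset.sum_nbij (· ^ 2) hmaps hinj
    (Finset.surjOn_of_injOn_of_card_le _ hmaps hinj le_rfl) fun _ _ ↦ rfl

variable {G : Type*} [CommGroup G]

theorem mapDomain_inv_eq_self_of_isIdempotentElem {t : ℕ} (hinv : ∀ g : G, g ^ 2 ^ t = g⁻¹)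
    {e : MonoidAlgebra (ZMod 2) G} (he : IsIdempotentElem e) : mapDomain (·⁻¹) e = e := by
  rw [show (fun g : G ↦ g⁻¹) = (· ^ 2 ^ t) from funext fun g ↦ (hinv g).symm,
    ← pow_char_pow_eq_mapDomain, he.pow_eq (by positivity)]

theorem exists_pow_two_pow_eq_inv_of_idempotents_fixed [Finite G]
    (hodd : Odd (Monoid.exponent G))
    (hsymm : ∀ e : MonoidAlgebra (ZMod 2) G, IsIdempotentElem e → mapDomain (·⁻¹) e = e)
    (g : G) : ∃ k, g ^ 2 ^ k = g⁻¹ := by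
  classical
  set T := (Set.toFinite (Set.range fun k : ℕ ↦ g ^ 2 ^ k)).toFinset
  set e := ∑ h ∈ T, single h (1 : ZMod 2)
  have hmaps : Set.MapsTo (· ^ 2) (T : Set G) T := by
    intro h hh
    simp only [T, Set.Finite.coe_toFinset, Set.mem_range] at hh ⊢
    obtain ⟨k, rfl⟩ := hh
    exact ⟨k + 1, by rw [pow_succ, pow_mul]⟩
  have he : IsIdempotentElem e := isIdempotentElem_sum_single_one hmaps
    (Monoid.pow_two_injective_of_odd_exponent hodd).injOn
  have hcoeff : ∀ x, e.coeff x = if x ∈ T then 1 else 0 := by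
    simp [e, coeff_sum, Finsupp.single_apply]
  have hg : g ∈ T := by simpa [T] using ⟨0, by simp⟩
  have key : e.coeff g⁻¹ = e.coeff g := by
    conv_rhs => rw [← hsymm e he]
    simpa using (Finsupp.mapDomain_apply inv_injective e.coeff g⁻¹).symm
  have hginv : g⁻¹ ∈ T := by simpa [hcoeff, hg] using key
  simpa [T] using hginv

end MonoidAlgebra

/-- Let `G` be a finite abelian group with exponent `n` coprime to `2`, and `*` the
classical involution on `F₂G` (sending `Σ a_g g` to `Σ a_g g⁻¹`). Then `F₂G` is
`*`-clean iff `2^t ≡ −1 (mod n)` for some positive integer `t`. -/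
theorem F2G_star_clean_iff
    (G : Type*) [CommGroup G] [Fintype G] (n : ℕ)
    (hn : Monoid.exponent G = n) (hcop : Nat.Coprime 2 n) :
    (∀ a : MonoidAlgebra (ZMod 2) G, ∃ u e : MonoidAlgebra (ZMod 2) G,
        IsUnit u ∧ IsIdempotentElem e ∧
        Finsupp.mapDomain (fun g : G => g⁻¹) e.coeff = e.coeff ∧ a = u + e) ↔
      ∃ t : ℕ, 0 < t ∧ (2 : ZMod n) ^ t = -1 := by
  constructor
  · intro hclean
    have hsymm (e : MonoidAlgebra (ZMod 2) G) (he : IsIdempotentElem e) :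
        MonoidAlgebra.mapDomain (·⁻¹) e = e := by
      obtain ⟨u, f, hu, hf, hf_symm, rfl⟩ := hclean e
      have hf_symm : MonoidAlgebra.mapDomain (·⁻¹) f = f :=
        MonoidAlgebra.coeff_injective hf_symm
      rw [hu.eq_one_of_isIdempotentElem_eq_add he hf rfl, MonoidAlgebra.mapDomain_add, hf_symm]
      simp [MonoidAlgebra.one_def]
    obtain ⟨g, hg⟩ :=
      Monoid.exists_orderOf_eq_exponent (Monoid.ExponentExists.of_finite (G := G))
    obtain ⟨k, hk⟩ := MonoidAlgebra.exists_pow_two_pow_eq_inv_of_idempotents_fixed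
      (hn ▸ hcop.odd_of_left) hsymm g
    rw [pow_eq_inv_iff_orderOf_dvd, hg, hn, ← ZMod.natCast_eq_neg_one_iff_dvd] at hk
    exact_mod_cast ZMod.exists_pos_pow_eq_neg_one hcop (by exact_mod_cast hk)
  · rintro ⟨t, -, ht⟩ a
    have hinv : ∀ g : G, g ^ 2 ^ t = g⁻¹ := by
      rw [forall_pow_eq_inv_iff_exponent_dvd, hn, ← ZMod.natCast_eq_neg_one_iff_dvd]
      exact_mod_cast ht
    obtain ⟨u, e, hu, he, rfl⟩ := exists_isUnit_isIdempotentElem_eq_add a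
    exact ⟨u, e, hu, he, congrArg MonoidAlgebra.coeff
      (MonoidAlgebra.mapDomain_inv_eq_self_of_isIdempotentElem hinv he), rfl⟩
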